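/- arXiv:1602.03709 — 6 statements merged into one kernel-verified Lean document; each statement's English description precedes it below -/
import Mathlib

section
/- Let E be a countable directed graph, u,v distinct vertices with an edge f from u to v, and suppose u emits at least two edges. Let G be the graph obtained from E by removing f and adding, for each edge e with r(e) = u, a new edge ē with s(ē) = s(e) and r(ē) = v. Then B_G = B' where B' is obtained from B_E = A_E − I by adding the u'th column into the v'th column. -/
/-- A countable directed graph. -/
structure DGraph where
  V : Type
  E : Type
  countV : Countable V
  countE : Countable E
  s : E → V
  r : E → V

/-- The adjacency matrix entry: number of edges from `u` to `w`, in `ℕ∞`. -/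
noncomputable def DGraph.adj (G : DGraph) (u w : G.V) : ℕ∞ :=
  {e : G.E | G.s e = u ∧ G.r e = w}.encard

/-- The graph `G` of Lemma 3.1: remove the edge `f` (from `u` to `v`) and add, for each
edge `e` with `r(e) = u`, a new edge `ē` with `s(ē) = s(e)` and `r(ē) = v`. -/
def DGraph.columnAddGraph (G : DGraph) (f : G.E) (u v : G.V) : DGraph where
  V := G.V
  E := {e : G.E // e ≠ f} ⊕ {e : G.E // G.r e = u}
  countV := G.countV
  countE := by haveI := G.countE; exact inferInstance
  s := Sum.elim (fun e => G.s e.1) (fun e => G.s e.1)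
  r := Sum.elim (fun e => G.r e.1) (fun _ => v)

/-! The edges of `G.columnAddGraph f u v` from `w` to `x` are the old ones other than `f`,
together with one copy of each edge from `w` to `u` when `x = v`. Since `f` goes from `u` to
`v`, removing it lowers the count exactly at the entry `(u, v)`, which the indicator restores. -/

theorem Set.encard_preimage_inl_add_encard_preimage_inr {α β : Type*} (s : Set (α ⊕ β)) :
    (Sum.inl ⁻¹' s).encard + (Sum.inr ⁻¹' s).encard = s.encard := by
  conv_rhs => rw [← image_preimage_inl_union_image_preimage_inr s]
  rw [encard_union_eq disjoint_image_inl_image_inr, Sum.inl_injective.encard_image,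
    Sum.inr_injective.encard_image]

theorem Set.encard_sdiff_singleton_add_ite {α : Type*} (s : Set α) (a : α) [Decidable (a ∈ s)] :
    (s \ {a}).encard + (if a ∈ s then 1 else 0) = s.encard := by
  split_ifs with ha
  · exact encard_sdiff_singleton_add_one ha
  · rw [sdiff_singleton_eq_self ha, add_zero]

namespace DGraph

variable (G : DGraph)

def edgesBetween (w x : G.V) : Set G.E := {e | G.s e = w ∧ G.r e = x}

theorem adj_eq_encard_edgesBetween (w x : G.V) : G.adj w x = (G.edgesBetween w x).encard := rfl

theorem columnAddGraph_adj_eq (f : G.E) (u v w x : G.V) [Decidable (x = v)] :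
    (G.columnAddGraph f u v).adj w x =
      (G.edgesBetween w x \ {f}).encard + if x = v then G.adj w u else 0 := by
  refine (Set.encard_preimage_inl_add_encard_preimage_inr
    (α := {e : G.E // e ≠ f}) (β := {e : G.E // G.r e = u}) _).symm.trans ?_
  congr 1
  · rw [← Subtype.val_injective.encard_image]
    congr 1
    ext e
    simp [columnAddGraph, edgesBetween]
  · split_ifs with hx
    · rw [← Subtype.val_injective.encard_image, adj]
      congr 1
      ext e
      simp [columnAddGraph, hx]
    · simp [columnAddGraph, Ne.symm hx]

end DGraph

open Classical in
/-- `B_G = B'` with `B = A - I`, written without subtraction. -/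
theorem columnAddGraph_adj_general (G : DGraph) (u v : G.V)
    (f : G.E) (hf : G.s f = u ∧ G.r f = v) :
    ∀ w x : G.V,
      (G.columnAddGraph f u v).adj w x + (if w = u ∧ x = v then 1 else 0) =
        G.adj w x + (if x = v then G.adj w u else 0) := by
  intro w x
  have hf_mem : f ∈ G.edgesBetween w x ↔ w = u ∧ x = v := by
    rw [DGraph.edgesBetween, Set.mem_ofPred_eq, hf.1, hf.2, eq_comm, @eq_comm _ v]
  simp only [← hf_mem]
  rw [G.columnAddGraph_adj_eq, add_right_comm, Set.encard_sdiff_singleton_add_ite,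
    G.adj_eq_encard_edgesBetween w x]

open Classical in
/-- `B_G = B'`, where `B'` is obtained from `B_E = A_E - I` by adding the `u`'th column
into the `v`'th column.  Since `B = A - I`, this is equivalent to the subtraction-free
identity `A_G(w,x) + [w = u ∧ x = v] = A_E(w,x) + [x = v]·A_E(w,u)` for all `w, x`. -/
theorem columnAddGraph_adj (G : DGraph) (u v : G.V) (huv : u ≠ v)
    (f : G.E) (hf : G.s f = u ∧ G.r f = v)
    (htwo : 2 ≤ {e : G.E | G.s e = u}.encard) :
    ∀ w x : G.V,
      (G.columnAddGraph f u v).adj w x + (if w = u ∧ x = v then 1 else 0) =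
        G.adj w x + (if x = v then G.adj w u else 0) :=
  columnAddGraph_adj_general G u v f hf
end

section
/- Let E be a countable directed graph, u,v distinct vertices with an edge from v to u, and suppose u is regular. Let G be the graph obtained from E by removing one edge f from v to u and adding, for each edge e with s(e) = u, a new edge ē with s(ē) = v and r(ē) = r(e). Then B_G equals the matrix obtained from B_E = A_E − I by adding the u'th row into the v'th row. -/
/-- The graph `G` of Lemma 3.4: remove the edge `f` (from `v` to `u`) and add, for each
edge `e` with `s(e) = u`, a new edge `ē` with `s(ē) = v` and `r(ē) = r(e)`. -/
def DGraph.rowAddGraph (G : DGraph) (f : G.E) (u v : G.V) : DGraph where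
  V := G.V
  E := {e : G.E // e ≠ f} ⊕ {e : G.E // G.s e = u}
  countV := G.countV
  countE := by haveI := G.countE; exact inferInstance
  s := Sum.elim (fun e => G.s e.1) (fun _ => v)
  r := Sum.elim (fun e => G.r e.1) (fun e => G.r e.1)

lemma encard_sum {α β : Type*} (s : Set (α ⊕ β)) :
    s.encard = (Sum.inl ⁻¹' s).encard + (Sum.inr ⁻¹' s).encard := by
  have h1 := (Sum.inl_injective : Function.Injective (Sum.inl : α → α ⊕ β)).encard_image (Sum.inl ⁻¹' s)
  have h2 := (Sum.inr_injective : Function.Injective (Sum.inr : β → α ⊕ β)).encard_image (Sum.inr ⁻¹' s)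
  rw [← h1, ← h2, ← Set.encard_union_eq]
  · congr 1
    rw [Set.image_preimage_eq_inter_range, Set.image_preimage_eq_inter_range,
      ← Set.inter_union_distrib_left]
    have : Set.range (Sum.inl : α → α ⊕ β) ∪ Set.range Sum.inr = Set.univ := by
      ext x; cases x <;> simp
    rw [this, Set.inter_univ]
  · exact Set.disjoint_left.mpr (by rintro _ ⟨a, _, rfl⟩ ⟨b, _, h⟩; simp at h)

lemma encard_subtype {α : Type*} (Q P : α → Prop) :
    {x : {a // Q a} | P x.1}.encard = {a | P a ∧ Q a}.encard := by
  rw [← Subtype.val_injective.encard_image {x : {a // Q a} | P x.1}]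
  congr 1
  ext a
  simp only [Set.mem_image, Set.mem_setOf_eq]
  constructor
  · rintro ⟨⟨b, hb⟩, hP, rfl⟩; exact ⟨hP, hb⟩
  · rintro ⟨hP, hQ⟩; exact ⟨⟨a, hQ⟩, hP, rfl⟩

open Classical in
/-- `B_G` equals the matrix obtained from `B_E = A_E - I` by adding the `u`'th row into
the `v`'th row.  Since `B = A - I`, this is equivalent to the subtraction-free identity
`A_G(w,x) + [w = v ∧ x = u] = A_E(w,x) + [w = v]·A_E(u,x)` for all `w, x`. -/
theorem rowAddGraph_adj (G : DGraph) (u v : G.V) (huv : u ≠ v)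
    (f : G.E) (hf : G.s f = v ∧ G.r f = u)
    (hreg : {e : G.E | G.s e = u}.Finite ∧ {e : G.E | G.s e = u}.Nonempty) :
    ∀ w x : G.V,
      (G.rowAddGraph f u v).adj w x + (if w = v ∧ x = u then 1 else 0) =
        G.adj w x + (if w = v then G.adj u x else 0) := by
  intro w x
  have hsplit : (G.rowAddGraph f u v).adj w x =
      {e : G.E | (G.s e = w ∧ G.r e = x) ∧ e ≠ f}.encard +
      {e : G.E | (v = w ∧ G.r e = x) ∧ G.s e = u}.encard := by
    unfold DGraph.adj DGraph.rowAddGraph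
    rw [encard_sum]
    congr 1
    · exact encard_subtype _ (fun e => G.s e = w ∧ G.r e = x)
    · exact encard_subtype _ (fun e => v = w ∧ G.r e = x)
  rw [hsplit]
  by_cases hw : w = v
  · have hright : {e : G.E | (v = w ∧ G.r e = x) ∧ G.s e = u}.encard = G.adj u x := by
      unfold DGraph.adj
      congr 1
      ext e
      simp only [Set.mem_setOf_eq]
      constructor
      · rintro ⟨⟨_, hr⟩, hs⟩; exact ⟨hs, hr⟩
      · rintro ⟨hs, hr⟩; exact ⟨⟨hw.symm, hr⟩, hs⟩
    rw [hright, if_pos hw]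
    by_cases hx : x = u
    · rw [if_pos ⟨hw, hx⟩]
      have hfmem : f ∈ {e : G.E | G.s e = w ∧ G.r e = x} := by
        exact ⟨hw ▸ hf.1, hx ▸ hf.2⟩
      have hset : {e : G.E | (G.s e = w ∧ G.r e = x) ∧ e ≠ f} =
          {e : G.E | G.s e = w ∧ G.r e = x} \ {f} := by
        ext e; simp only [Set.mem_setOf_eq, Set.mem_diff, Set.mem_singleton_iff]
      rw [hset, add_right_comm, Set.encard_diff_singleton_add_one hfmem]
      rfl
    · rw [if_neg (fun h => hx h.2), add_zero]
      have hset : {e : G.E | (G.s e = w ∧ G.r e = x) ∧ e ≠ f} =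
          {e : G.E | G.s e = w ∧ G.r e = x} := by
        ext e
        simp only [Set.mem_setOf_eq, and_iff_left_iff_imp]
        rintro ⟨_, hr⟩ rfl
        exact hx (hr.symm.trans hf.2)
      rw [hset]
      rfl
  · rw [if_neg (fun h => hw h.1), if_neg hw, add_zero, add_zero]
    have h1 : {e : G.E | (v = w ∧ G.r e = x) ∧ G.s e = u} = ∅ := by
      ext e; simp only [Set.mem_setOf_eq, Set.mem_empty_iff_false, iff_false]
      rintro ⟨⟨h, _⟩, _⟩; exact hw h.symm
    have h2 : {e : G.E | (G.s e = w ∧ G.r e = x) ∧ e ≠ f} =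
        {e : G.E | G.s e = w ∧ G.r e = x} := by
      ext e
      simp only [Set.mem_setOf_eq, and_iff_left_iff_imp]
      rintro ⟨hs, _⟩ rfl
      exact hw (hs.symm.trans hf.1)
    rw [h1, h2, Set.encard_empty, add_zero]
    rfl
end

section
/- Consider the 5-vertex graph (E_**)_{w_2,w_3,w_4} with vertices w_1, w_2, w_3, w_4, w_1', where w_1' is a sink, and adjacency matrix A (rows = sources) given by: A(w_1,·) = (1,1,1,0,1) for columns (w_1,w_2,w_3,w_4,w_1'); A(w_2,·) = (1,1,0,0,1); A(w_3,·) = (1,0,1,1,1); A(w_4,·) = (0,0,1,1,0); A(w_1',·) = 0. Then the map (A^t − I) : ℤ^{w_1,w_2,w_3,w_4} → ℤ^{w_1,w_2,w_3,w_4,w_1'} has trivial kernel and cokernel isomorphic to ℤ, generated by the class of e_{w_1'}; moreover in the cokernel [e_{w_1}] = [e_{w_2}] = −[e_{w_1'}] and [e_{w_3}] = [e_{w_4}] = 0. -/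
open Matrix

noncomputable def Mmat : Matrix (Fin 5) (Fin 4) ℤ :=
  (((!![1,1,1,0,1; 1,1,0,0,1; 1,0,1,1,1; 0,0,1,1,0; 0,0,0,0,0] : Matrix (Fin 5) (Fin 5) ℤ))ᵀ - 1).submatrix id Fin.castSucc

lemma Mmat_eq : Mmat = !![0,1,1,0; 1,0,0,0; 1,0,0,1; 0,0,1,0; 1,1,1,0] := by
  funext i j
  fin_cases i <;> fin_cases j <;>
    simp [Mmat, Matrix.one_apply, Fin.castSucc, Fin.castAdd, Fin.castLE] <;> decide

lemma Mmat_apply (v : Fin 4 → ℤ) :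
    Matrix.toLin' Mmat v = ![v 1 + v 2, v 0, v 0 + v 3, v 2, v 0 + v 1 + v 2] := by
  funext i
  rw [Mmat_eq]
  fin_cases i <;>
    simp [Matrix.toLin'_apply, Matrix.mulVec, dotProduct, Fin.sum_univ_succ] <;> first | rfl | ring

noncomputable def fm : (Fin 5 → ℤ) →ₗ[ℤ] ℤ :=
  (LinearMap.proj (R := ℤ) (φ := fun _ : Fin 5 => ℤ) 4)
    - (LinearMap.proj (R := ℤ) (φ := fun _ : Fin 5 => ℤ) 0)
    - (LinearMap.proj (R := ℤ) (φ := fun _ : Fin 5 => ℤ) 1)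

lemma fm_apply (x : Fin 5 → ℤ) : fm x = x 4 - x 0 - x 1 := rfl

lemma range_eq : LinearMap.range (Matrix.toLin' Mmat) = LinearMap.ker fm := by
  ext x
  constructor
  · rintro ⟨v, rfl⟩
    rw [LinearMap.mem_ker, fm_apply, Mmat_apply]
    simp
    try ring
  · intro hx
    have h : x 4 - x 0 - x 1 = 0 := LinearMap.mem_ker.mp hx
    exact ⟨![x 1, x 0 - x 3, x 3, x 2 - x 1], by
      rw [Mmat_apply]; funext i; fin_cases i <;> simp <;> linarith⟩

lemma ker_bot : LinearMap.ker (Matrix.toLin' Mmat) = ⊥ := by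
  rw [LinearMap.ker_eq_bot']
  intro v hv
  rw [Mmat_apply] at hv
  have h0 := congrFun hv 0
  have h1 := congrFun hv 1
  have h2 := congrFun hv 2
  have h3 := congrFun hv 3
  simp at h0 h1 h2 h3
  funext j
  fin_cases j <;> simp <;> linarith

lemma fm_surj : Function.Surjective fm := by
  intro c
  exact ⟨Pi.single 4 c, by simp [fm_apply, Pi.single_apply]⟩

noncomputable def cokerIso : ((Fin 5 → ℤ) ⧸ LinearMap.range (Matrix.toLin' Mmat)) ≃ₗ[ℤ] ℤ :=
  (Submodule.quotEquivOfEq _ _ range_eq).trans (fm.quotKerEquivOfSurjective fm_surj)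

lemma mem_range (x : Fin 5 → ℤ) (h : x 4 - x 0 - x 1 = 0) :
    x ∈ LinearMap.range (Matrix.toLin' Mmat) := by
  rw [range_eq]; exact LinearMap.mem_ker.mpr h

lemma span_top :
    Submodule.span ℤ {(LinearMap.range (Matrix.toLin' Mmat)).mkQ (Pi.single 4 1)} = ⊤ := by
  rw [Submodule.eq_top_iff']
  intro q
  obtain ⟨x, rfl⟩ := Submodule.mkQ_surjective _ q
  rw [Submodule.mem_span_singleton]
  refine ⟨fm x, ?_⟩
  rw [← _root_.map_smul, eq_comm, Submodule.mkQ_apply, Submodule.mkQ_apply,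
    Submodule.Quotient.eq]
  apply mem_range
  simp [fm_apply, Pi.single_apply]
  ring

lemma rel01 : (LinearMap.range (Matrix.toLin' Mmat)).mkQ (Pi.single 0 1) =
    (LinearMap.range (Matrix.toLin' Mmat)).mkQ (Pi.single 1 1) := by
  rw [Submodule.mkQ_apply, Submodule.mkQ_apply, Submodule.Quotient.eq]
  apply mem_range; simp [Pi.single_apply]

lemma rel04 : (LinearMap.range (Matrix.toLin' Mmat)).mkQ (Pi.single 0 1) =
    -(LinearMap.range (Matrix.toLin' Mmat)).mkQ (Pi.single 4 1) := by
  rw [← map_neg, Submodule.mkQ_apply, Submodule.mkQ_apply, Submodule.Quotient.eq]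
  apply mem_range; simp [Pi.single_apply]

lemma rel2 : (LinearMap.range (Matrix.toLin' Mmat)).mkQ (Pi.single 2 1) = 0 := by
  rw [Submodule.mkQ_apply, Submodule.Quotient.mk_eq_zero]
  apply mem_range; simp [Pi.single_apply]

lemma rel3 : (LinearMap.range (Matrix.toLin' Mmat)).mkQ (Pi.single 3 1) = 0 := by
  rw [Submodule.mkQ_apply, Submodule.Quotient.mk_eq_zero]
  apply mem_range; simp [Pi.single_apply]


/-- K-theory computation for the graph `(E_**)_{w₂,w₃,w₄}` with vertices
`w₁, w₂, w₃, w₄, w₁'` (where `w₁'` is a sink) and the given adjacency matrix `A`.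
The map `(Aᵀ - I) : ℤ^{w₁,…,w₄} → ℤ^{w₁,…,w₄,w₁'}` has trivial kernel, its cokernel
is isomorphic to `ℤ` and is generated by the class of `e_{w₁'}`, and in the cokernel
`[e_{w₁}] = [e_{w₂}] = -[e_{w₁'}]` and `[e_{w₃}] = [e_{w₄}] = 0`. -/
theorem Estarstar_relative_K_theory :
    let A : Matrix (Fin 5) (Fin 5) ℤ :=
      !![1,1,1,0,1; 1,1,0,0,1; 1,0,1,1,1; 0,0,1,1,0; 0,0,0,0,0]
    let M : Matrix (Fin 5) (Fin 4) ℤ := (Aᵀ - 1).submatrix id Fin.castSucc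
    let π := (LinearMap.range (Matrix.toLin' M)).mkQ
    LinearMap.ker (Matrix.toLin' M) = ⊥ ∧
    Nonempty (((Fin 5 → ℤ) ⧸ LinearMap.range (Matrix.toLin' M)) ≃ₗ[ℤ] ℤ) ∧
    Submodule.span ℤ {π (Pi.single 4 1)} = ⊤ ∧
    π (Pi.single 0 1) = π (Pi.single 1 1) ∧
    π (Pi.single 0 1) = -π (Pi.single 4 1) ∧
    π (Pi.single 2 1) = 0 ∧
    π (Pi.single 3 1) = 0 := by
  exact ⟨ker_bot, ⟨cokerIso⟩, span_top, rel01, rel04, rel2, rel3⟩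
end

section
/- Let M be the (2+n)×(2+n) block matrix M = [[C, D],[E, B]] with C = [[0,0],[1,-1]], D = [[b_{11}, b_{12}, b_{13}, …],[0,0,0,…]], E having first column (0,0,…)^t and second column (1,0,0,…)^t, and B equal to a matrix B̃ which agrees with a given matrix (b_{ij}) except its (1,1) entry is b_{11} − 1. Assume b_{11} ≥ 1 and the b_{1k} are eventually zero. Define C_2 = M·E_{(1,2)}·E_{(1,2)}, C_3 = E_{(1,2)}·C_2, C_4 = E_{(1,3)}^{-1}·C_3, C_5 = C_4·E_{(2,3)}, C_6 = C_5·E_{(1,2)}. Then C_6 = [[C', D'],[E', B']] with C' = [[1,1],[1,2]], D' = [[1,0,0,…],[1,0,0,…]], E' having first column (0,0,…)^t and second column (1,0,…)^t, and B' = (b_{ij}) (the original matrix with (1,1) entry b_{11}). -/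
open Matrix

/-- Add row `j` into row `i` (left multiplication by `E_{(i,j)}`). -/
def addRowM {ι : Type*} [DecidableEq ι] (M : Matrix ι ι ℤ) (i j : ι) : Matrix ι ι ℤ :=
  fun k l => if k = i then M k l + M j l else M k l

/-- Subtract row `j` from row `i` (left multiplication by `E_{(i,j)}⁻¹`). -/
def subRowM {ι : Type*} [DecidableEq ι] (M : Matrix ι ι ℤ) (i j : ι) : Matrix ι ι ℤ :=
  fun k l => if k = i then M k l - M j l else M k l

/-- Add column `c` into column `d` (right multiplication by `E_{(c,d)}`). -/
def addColM {ι : Type*} [DecidableEq ι] (M : Matrix ι ι ℤ) (c d : ι) : Matrix ι ι ℤ :=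
  fun k l => if l = d then M k l + M k c else M k l

/-- The elementary-operations computation in the proof that Cuntz splicing twice is a
legal move: starting from the block matrix `M = [[C, D],[E, B̃]]` with
`C = [[0,0],[1,-1]]`, `D = [[b₁₁, b₁₂, …],[0,0,…]]`, `E` with first column `0` and
second column `(1,0,0,…)ᵗ`, and `B̃` equal to `(b_{ij})` except its `(1,1)` entry is
`b₁₁ - 1`, the sequence of operations
`C₂ = M·E_{(1,2)}·E_{(1,2)}`, `C₃ = E_{(1,2)}·C₂`, `C₄ = E_{(1,3)}⁻¹·C₃`,
`C₅ = C₄·E_{(2,3)}`, `C₆ = C₅·E_{(1,2)}`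
yields `C₆ = [[C', D'],[E', B']]` with `C' = [[1,1],[1,2]]`, `D' = [[1,0,…],[1,0,…]]`,
`E' = E`, and `B' = (b_{ij})`. -/
theorem double_splice_block_computation (b : ℕ → ℕ → ℤ) (hb : 1 ≤ b 0 0)
    (hfin : ∃ N : ℕ, ∀ k, N ≤ k → b 0 k = 0) :
    let C : Matrix (Fin 2) (Fin 2) ℤ := !![0,0; 1,-1]
    let D : Matrix (Fin 2) ℕ ℤ := fun i j => if i = 0 then b 0 j else 0
    let Em : Matrix ℕ (Fin 2) ℤ := fun i j => if i = 0 ∧ j = 1 then 1 else 0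
    let Bt : Matrix ℕ ℕ ℤ := fun i j => if i = 0 ∧ j = 0 then b 0 0 - 1 else b i j
    let M := Matrix.fromBlocks C D Em Bt
    let i₁ : Fin 2 ⊕ ℕ := Sum.inl 0
    let i₂ : Fin 2 ⊕ ℕ := Sum.inl 1
    let i₃ : Fin 2 ⊕ ℕ := Sum.inr 0
    let C₂ := addColM (addColM M i₁ i₂) i₁ i₂
    let C₃ := addRowM C₂ i₁ i₂
    let C₄ := subRowM C₃ i₁ i₃
    let C₅ := addColM C₄ i₂ i₃
    let C₆ := addColM C₅ i₁ i₂
    C₆ = Matrix.fromBlocks !![1,1; 1,2]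
        (fun _ j => if j = 0 then 1 else 0) Em (fun i j => b i j) := by
  intro C D Em Bt M i₁ i₂ i₃ C₂ C₃ C₄ C₅ C₆
  ext k l
  simp only [C₆, C₅, C₄, C₃, C₂, addColM, addRowM, subRowM, M, C, D, Em, Bt, i₁, i₂, i₃,
    Matrix.fromBlocks]
  rcases k with k | k <;> rcases l with l | l
  all_goals try fin_cases k
  all_goals try fin_cases l
  all_goals simp [Matrix.of_apply, Fin.isValue]
  all_goals split_ifs <;> simp_all <;> omega
end

section
/- Let E be a directed graph and u a vertex of E supporting at least two distinct return paths, and let E_{u,−} be the Cuntz splice of E at u (adding vertices u_1, u_2 and edges e_1: u→u_1, e_2: u_1→u, f_1: u_1→u_1, f_2: u_1→u_2, h_1: u_2→u_1, h_2: u_2→u_2). Then every vertex-simple cycle in E_{u,−} that has no exit lies entirely in E; i.e. no edge of such a cycle belongs to the added edge set {e_1,e_2,f_1,f_2,h_1,h_2} and no vertex of the cycle equals u_1 or u_2. -/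
/-- `α : Fin (n+1) → G.E` is a path: consecutive edges are composable. -/
def DGraph.IsPathSeq (G : DGraph) {n : ℕ} (α : Fin (n + 1) → G.E) : Prop :=
  ∀ i : Fin n, G.r (α i.castSucc) = G.s (α i.succ)

/-- A cycle: a nonempty path whose source equals its range. -/
def DGraph.IsCycle (G : DGraph) {n : ℕ} (α : Fin (n + 1) → G.E) : Prop :=
  G.IsPathSeq α ∧ G.s (α 0) = G.r (α (Fin.last n))

/-- A vertex-simple cycle: the ranges of the edges are pairwise distinct. -/
def DGraph.IsVertexSimple (G : DGraph) {n : ℕ} (α : Fin (n + 1) → G.E) : Prop :=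
  Function.Injective fun i : Fin (n + 1) => G.r (α i)

/-- The cycle `α` has an exit: some edge `g` has its source on the cycle but is not an
edge of the cycle (at that position). -/
def DGraph.HasExit (G : DGraph) {n : ℕ} (α : Fin (n + 1) → G.E) : Prop :=
  ∃ g : G.E, ∃ i : Fin (n + 1), G.s g = G.s (α i) ∧ g ≠ α i

/-- A return path based at `v`: a cycle starting and ending at `v` which visits `v`
only at its endpoints. -/
def DGraph.IsReturnPath (G : DGraph) (v : G.V) {n : ℕ} (α : Fin (n + 1) → G.E) : Prop :=
  G.IsPathSeq α ∧ G.s (α 0) = v ∧ G.r (α (Fin.last n)) = v ∧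
    ∀ i : Fin (n + 1), i ≠ Fin.last n → G.r (α i) ≠ v

/-- `v` supports at least two distinct return paths (distinct as edge sequences). -/
def DGraph.TwoReturnPaths (G : DGraph) (v : G.V) : Prop :=
  ∃ p q : (Σ n : ℕ, Fin (n + 1) → G.E),
    G.IsReturnPath v p.2 ∧ G.IsReturnPath v q.2 ∧ p ≠ q

/-- The Cuntz splice `E_{u,-}` of `G` at `u`: two new vertices `u₁ = inr 0`,
`u₂ = inr 1` and six new edges `e₁ : u → u₁`, `e₂ : u₁ → u`, `f₁ : u₁ → u₁`,
`f₂ : u₁ → u₂`, `h₁ : u₂ → u₁`, `h₂ : u₂ → u₂`. -/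
def DGraph.cuntzSplice (G : DGraph) (u : G.V) : DGraph where
  V := G.V ⊕ Fin 2
  E := G.E ⊕ Fin 6
  countV := by haveI := G.countV; exact inferInstance
  countE := by haveI := G.countE; exact inferInstance
  s := Sum.elim (fun e => Sum.inl (G.s e))
    ![Sum.inl u, Sum.inr 0, Sum.inr 0, Sum.inr 0, Sum.inr 1, Sum.inr 1]
  r := Sum.elim (fun e => Sum.inl (G.r e))
    ![Sum.inr 0, Sum.inl u, Sum.inr 0, Sum.inr 1, Sum.inr 0, Sum.inr 1]

theorem DGraph.IsReturnPath.exists_source_eq {G : DGraph} {v : G.V} {n : ℕ}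
    {α : Fin (n + 1) → G.E} (h : G.IsReturnPath v α) : ∃ e : G.E, G.s e = v :=
  ⟨α 0, h.2.1⟩

namespace DGraph.cuntzSplice

variable {G : DGraph} {u : G.V}

/-- `u` emits `e₁` and an edge of `G`, `u₁` emits `e₂, f₁, f₂`, and `u₂` emits `h₁, h₂`. -/
theorem exists_ne_source_eq_inr {e : G.E} (he : G.s e = u) (k : Fin 6) :
    ∃ g, (G.cuntzSplice u).s g = (G.cuntzSplice u).s (Sum.inr k) ∧ g ≠ Sum.inr k := by
  have inr_ne {a b : Fin 6} (hab : a ≠ b) : (Sum.inr a : G.E ⊕ Fin 6) ≠ Sum.inr b :=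
    Sum.inr_injective.ne hab
  fin_cases k
  · exact ⟨Sum.inl e, congrArg Sum.inl he, Sum.inl_ne_inr⟩
  · exact ⟨Sum.inr 2, rfl, inr_ne (by decide)⟩
  · exact ⟨Sum.inr 1, rfl, inr_ne (by decide)⟩
  · exact ⟨Sum.inr 1, rfl, inr_ne (by decide)⟩
  · exact ⟨Sum.inr 5, rfl, inr_ne (by decide)⟩
  · exact ⟨Sum.inr 4, rfl, inr_ne (by decide)⟩

theorem exists_eq_inl_of_not_hasExit {e : G.E} (he : G.s e = u) {n : ℕ}
    {α : Fin (n + 1) → (G.cuntzSplice u).E} (hnoexit : ¬ (G.cuntzSplice u).HasExit α)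
    (i : Fin (n + 1)) : ∃ e : G.E, α i = Sum.inl e := by
  rcases h : α i with e' | k
  · exact ⟨e', rfl⟩
  · obtain ⟨g, hs, hne⟩ := exists_ne_source_eq_inr he k
    exact absurd ⟨g, i, h ▸ hs, h ▸ hne⟩ hnoexit

end DGraph.cuntzSplice

theorem cuntz_splice_cycle_in_original_general (G : DGraph) (u : G.V)
    (h2 : G.TwoReturnPaths u) {n : ℕ} (α : Fin (n + 1) → (G.cuntzSplice u).E)
    (hnoexit : ¬ (G.cuntzSplice u).HasExit α) :
    (∀ i : Fin (n + 1), ∃ e : G.E, α i = Sum.inl e) ∧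
    (∀ i : Fin (n + 1), ∀ j : Fin 2,
      (G.cuntzSplice u).r (α i) ≠ Sum.inr j ∧ (G.cuntzSplice u).s (α i) ≠ Sum.inr j) := by
  obtain ⟨p, -, hp, -⟩ := h2
  obtain ⟨e, he⟩ := hp.exists_source_eq
  have hedges := DGraph.cuntzSplice.exists_eq_inl_of_not_hasExit he hnoexit
  refine ⟨hedges, fun i j => ?_⟩
  obtain ⟨e', he'⟩ := hedges i
  rw [he']
  exact ⟨Sum.inl_ne_inr, Sum.inl_ne_inr⟩

/-- Every vertex-simple cycle without an exit in the Cuntz splice `E_{u,-}` lies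
entirely in `E`: none of its edges is one of the six added edges, and none of its
vertices is `u₁` or `u₂`. -/
theorem cuntz_splice_cycle_in_original (G : DGraph) (u : G.V)
    (h2 : G.TwoReturnPaths u) {n : ℕ} (α : Fin (n + 1) → (G.cuntzSplice u).E)
    (hcyc : (G.cuntzSplice u).IsCycle α)
    (hsimple : (G.cuntzSplice u).IsVertexSimple α)
    (hnoexit : ¬ (G.cuntzSplice u).HasExit α) :
    (∀ i : Fin (n + 1), ∃ e : G.E, α i = Sum.inl e) ∧
    (∀ i : Fin (n + 1), ∀ j : Fin 2,
      (G.cuntzSplice u).r (α i) ≠ Sum.inr j ∧ (G.cuntzSplice u).s (α i) ≠ Sum.inr j) :=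
  cuntz_splice_cycle_in_original_general G u h2 α hnoexit
end

section
/- Let E be a directed graph and u a vertex supporting at least two distinct return paths. Then in the Cuntz-spliced graph E_{u,−}, the vertex u supports at least two distinct return paths, and moreover the new vertices u_1 and u_2 each support at least two distinct return paths in E_{u,−}. -/
/-- If `u` supports at least two distinct return paths in `E`, then in the Cuntz splice
`E_{u,-}` the vertex `u` still supports at least two distinct return paths, and so do
the new vertices `u₁` and `u₂`. -/
theorem cuntz_splice_two_return_paths (G : DGraph) (u : G.V)
    (h2 : G.TwoReturnPaths u) :
    (G.cuntzSplice u).TwoReturnPaths (Sum.inl u) ∧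
    (G.cuntzSplice u).TwoReturnPaths (Sum.inr 0) ∧
    (G.cuntzSplice u).TwoReturnPaths (Sum.inr 1) := by
  obtain ⟨p, q, hp, hq, hpq⟩ := h2
  refine ⟨?_, ?_, ?_⟩
  · -- u : map the original return paths via Sum.inl
    refine ⟨⟨p.1, fun i => Sum.inl (p.2 i)⟩, ⟨q.1, fun i => Sum.inl (q.2 i)⟩, ?_, ?_, ?_⟩
    · obtain ⟨h1, h2, h3, h4⟩ := hp
      refine ⟨fun i => ?_, ?_, ?_, fun i hi => ?_⟩
      · show Sum.inl (G.r _) = Sum.inl (G.s _); rw [h1 i]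
      · show Sum.inl (G.s _) = Sum.inl u; rw [h2]
      · show Sum.inl (G.r _) = Sum.inl u; rw [h3]
      · show Sum.inl (G.r _) ≠ Sum.inl u
        simpa using h4 i hi
    · obtain ⟨h1, h2, h3, h4⟩ := hq
      refine ⟨fun i => ?_, ?_, ?_, fun i hi => ?_⟩
      · show Sum.inl (G.r _) = Sum.inl (G.s _); rw [h1 i]
      · show Sum.inl (G.s _) = Sum.inl u; rw [h2]
      · show Sum.inl (G.r _) = Sum.inl u; rw [h3]
      · show Sum.inl (G.r _) ≠ Sum.inl u
        simpa using h4 i hi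
    · intro h
      apply hpq
      obtain ⟨n, f⟩ := p
      obtain ⟨m, g⟩ := q
      simp only at h
      injection h with h1 h2
      subst h1
      have h2 := eq_of_heq h2
      congr 1
      funext i
      exact Sum.inl_injective (congrFun h2 i)
  · -- u₁ : loop f₁ and path f₂ h₁
    refine ⟨⟨0, fun _ => Sum.inr 2⟩, ⟨1, ![Sum.inr 3, Sum.inr 4]⟩, ?_, ?_, ?_⟩
    · exact ⟨fun i => i.elim0, rfl, rfl, fun i hi => absurd (@Subsingleton.elim _ Fin.subsingleton_one i _) hi⟩
    · refine ⟨fun i => ?_, rfl, rfl, fun i hi => ?_⟩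
      · fin_cases i; rfl
      · fin_cases i
        · intro h; exact absurd (Sum.inr.inj h) (by decide)
        · exact absurd rfl hi
    · intro h
      have : (0 : ℕ) = 1 := congrArg Sigma.fst h
      omega
  · -- u₂ : loop h₂ and path h₁ f₂
    refine ⟨⟨0, fun _ => Sum.inr 5⟩, ⟨1, ![Sum.inr 4, Sum.inr 3]⟩, ?_, ?_, ?_⟩
    · exact ⟨fun i => i.elim0, rfl, rfl, fun i hi => absurd (@Subsingleton.elim _ Fin.subsingleton_one i _) hi⟩
    · refine ⟨fun i => ?_, rfl, rfl, fun i hi => ?_⟩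
      · fin_cases i; rfl
      · fin_cases i
        · intro h; exact absurd (Sum.inr.inj h) (by decide)
        · exact absurd rfl hi
    · intro h
      have : (0 : ℕ) = 1 := congrArg Sigma.fst h
      omega
end
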